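/- The ℂ-algebra homomorphism φ : ℂ[[x,y]] → ℂ[[t]] given by the substitution x ↦ t², y ↦ t³ has kernel equal to the principal ideal (y² − x³) of ℂ[[x,y]], and its image equals the subalgebra ℂ[[t²,t³]] of ℂ[[t]] consisting of all power series whose coefficient of t vanishes. Consequently φ induces a ℂ-algebra isomorphism ℂ[[x,y]]/(y² − x³) ≅ ℂ[[t²,t³]]. -/

import Mathlib

set_option synthInstance.maxHeartbeats 1000000
set_option maxHeartbeats 1000000

/-- The subalgebra `ℂ[[t²,t³]]` of `ℂ[[t]]`: power series whose coefficient of `t` vanishes. -/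
noncomputable def cuspAlgebra : Subalgebra ℂ (PowerSeries ℂ) where
  carrier := {f | PowerSeries.coeff 1 f = 0}
  add_mem' := by
    intro a b ha hb
    simp only [Set.mem_setOf_eq, map_add] at *
    rw [ha, hb, add_zero]
  mul_mem' := by
    intro a b ha hb
    simp only [Set.mem_setOf_eq] at *
    rw [PowerSeries.coeff_mul, Finset.Nat.sum_antidiagonal_eq_sum_range_succ_mk]
    simp [Finset.sum_range_succ, ha, hb]
  one_mem' := by simp [Set.mem_setOf_eq, PowerSeries.coeff_one]
  algebraMap_mem' := by
    intro c
    simp [Set.mem_setOf_eq, PowerSeries.algebraMap_apply, PowerSeries.coeff_C]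

/-!
Give `x` and `y` the weights 2 and 3. The coefficient of `tⁿ` in `φ F` is the sum of the
coefficients of `F` along the chain `x^a y^b, x^(a-3) y^(b+2), x^(a-6) y^(b+4), …` of monomials of
weight `n`, and each chain starts at a unique monomial with `b ≤ 1`. Summing the coefficients of
`F` along the tails of these chains gives an explicit division
`F = (y² - x³) Q + A(x) + y B(x)` whose remainder is read off from `φ F`:
`A_a` and `B_a` are the coefficients of `t^(2a)` and `t^(2a+3)` in `φ F`. So `φ F = 0` puts `F`
in `(y² - x³)`, and for `f` with no `t` term the remainder built from `f` is a preimage of `f`.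
-/

namespace Cusp

open MvPowerSeries Finset

noncomputable section

variable {R : Type*} [CommRing R]

def bidegree (a b : ℕ) : Fin 2 →₀ ℕ := Finsupp.single 0 a + Finsupp.single 1 b

@[simp] lemma bidegree_apply_zero (a b : ℕ) : bidegree a b 0 = a := by simp [bidegree]

@[simp] lemma bidegree_apply_one (a b : ℕ) : bidegree a b 1 = b := by simp [bidegree]

lemma bidegree_apply_self (d : Fin 2 →₀ ℕ) : bidegree (d 0) (d 1) = d := by
  ext i; fin_cases i <;> simp

lemma bidegree_inj {a b a' b' : ℕ} : bidegree a b = bidegree a' b' ↔ a = a' ∧ b = b' :=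
  ⟨fun h => ⟨by simpa using congr($h 0), by simpa using congr($h 1)⟩,
    by rintro ⟨rfl, rfl⟩; rfl⟩

lemma bidegree_sub (a b a' b' : ℕ) :
    bidegree a b - bidegree a' b' = bidegree (a - a') (b - b') := by
  ext i; fin_cases i <;> simp

lemma single_zero_eq_bidegree (a : ℕ) : Finsupp.single 0 a = bidegree a 0 := by simp [bidegree]

lemma single_one_eq_bidegree (b : ℕ) : Finsupp.single 1 b = bidegree 0 b := by simp [bidegree]

def ofBicoeff (f : ℕ → ℕ → R) : MvPowerSeries (Fin 2) R := fun d => f (d 0) (d 1)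

@[simp] lemma coeff_ofBicoeff (f : ℕ → ℕ → R) (a b : ℕ) :
    coeff (bidegree a b) (ofBicoeff f) = f a b := by
  rw [coeff_apply, ofBicoeff, bidegree_apply_zero, bidegree_apply_one]

def cuspPoly : MvPowerSeries (Fin 2) R := X 1 ^ 2 - X 0 ^ 3

lemma coeff_cuspPoly_mul (G : MvPowerSeries (Fin 2) R) (a b : ℕ) :
    coeff (bidegree a b) (cuspPoly * G) =
      (if 2 ≤ b then coeff (bidegree a (b - 2)) G else 0) -
        (if 3 ≤ a then coeff (bidegree (a - 3) b) G else 0) := by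
  simp only [cuspPoly, X_pow_eq, single_zero_eq_bidegree, single_one_eq_bidegree, sub_mul,
    map_sub, coeff_monomial_mul, one_mul, bidegree_sub, Finsupp.le_def, Fin.forall_fin_two,
    bidegree_apply_zero, bidegree_apply_one, Nat.sub_zero, zero_le, true_and, and_true]

/-- The steps `x³ ↦ y²` preserve the weight `2a + 3b`; for `b ≤ 1` the chain runs through all
monomials of that weight. -/
def chainSum (F : MvPowerSeries (Fin 2) R) (a b : ℕ) : R :=
  ∑ k ∈ range (a / 3 + 1), coeff (bidegree (a - 3 * k) (b + 2 * k)) F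

lemma chainSum_eq (F : MvPowerSeries (Fin 2) R) (a b : ℕ) :
    chainSum F a b =
      coeff (bidegree a b) F + if 3 ≤ a then chainSum F (a - 3) (b + 2) else 0 := by
  rw [chainSum, sum_range_succ', Nat.mul_zero, Nat.sub_zero, Nat.add_zero, add_comm]
  congr 1
  split_ifs with ha
  · rw [chainSum, show a / 3 = (a - 3) / 3 + 1 by omega]
    refine sum_congr rfl fun k _ => ?_
    congr 3 <;> omega
  · rw [show a / 3 = 0 by omega, sum_range_zero]

def cuspQuo (F : MvPowerSeries (Fin 2) R) : MvPowerSeries (Fin 2) R :=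
  ofBicoeff fun a b => chainSum F a (b + 2)

/-- The remainder `A(x) + y B(x)` of division by `y² - x³` that the substitution maps to `f`
(when `f` has no `t` term). -/
def cuspLift (f : PowerSeries R) : MvPowerSeries (Fin 2) R :=
  ofBicoeff fun a b => if b ≤ 1 then PowerSeries.coeff (2 * a + 3 * b) f else 0

lemma cuspLift_zero : cuspLift (0 : PowerSeries R) = 0 := by
  ext d
  rw [← bidegree_apply_self d, cuspLift, coeff_ofBicoeff]
  simp

lemma chainSum_cuspLift_of_one_lt (f : PowerSeries R) (a : ℕ) {b : ℕ} (hb : 1 < b) :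
    chainSum (cuspLift f) a b = 0 :=
  sum_eq_zero fun k _ => by rw [cuspLift, coeff_ofBicoeff, if_neg (by omega)]

def IsCuspSubst (φ : MvPowerSeries (Fin 2) R → PowerSeries R) : Prop :=
  ∀ (F : MvPowerSeries (Fin 2) R) (n : ℕ),
    PowerSeries.coeff n (φ F) =
      ∑ p ∈ (range (n + 1) ×ˢ range (n + 1)).filter (fun p => 2 * p.1 + 3 * p.2 = n),
        coeff (bidegree p.1 p.2) F

section Subst

variable {φ : MvPowerSeries (Fin 2) R → PowerSeries R} (hφ : IsCuspSubst φ)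
include hφ

lemma IsCuspSubst.coeff_eq_chainSum (F : MvPowerSeries (Fin 2) R) {i j : ℕ} (hj : j ≤ 1) :
    PowerSeries.coeff (2 * i + 3 * j) (φ F) = chainSum F i j := by
  rw [hφ, chainSum]
  refine sum_nbij' (fun p => (p.2 - j) / 2) (fun k => (i - 3 * k, j + 2 * k)) ?_ ?_ ?_ ?_ ?_
  all_goals
    intro p hp
    simp only [mem_filter, mem_product, mem_range] at hp ⊢
  · omega
  · omega
  · ext <;> simp only <;> omega
  · omega
  · rw [show i - 3 * ((p.2 - j) / 2) = p.1 by omega, show j + 2 * ((p.2 - j) / 2) = p.2 by omega]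

lemma IsCuspSubst.coeff_one_eq_zero (F : MvPowerSeries (Fin 2) R) :
    PowerSeries.coeff 1 (φ F) = 0 := by
  rw [hφ]
  refine sum_eq_zero fun p hp => ?_
  simp only [mem_filter] at hp
  omega

lemma IsCuspSubst.map_monomial (a b : ℕ) (r : R) :
    φ (monomial (bidegree a b) r) = PowerSeries.monomial (2 * a + 3 * b) r := by
  classical
  ext n
  rw [hφ]
  simp only [coeff_monomial, PowerSeries.coeff_monomial, bidegree_inj, ← Prod.mk.injEq,
    Prod.mk.eta]
  rw [sum_ite_eq']
  congr 1
  simp only [mem_filter, mem_product, mem_range, eq_iff_iff]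
  omega

lemma IsCuspSubst.cuspPoly_mul_cuspQuo_add_cuspLift (F : MvPowerSeries (Fin 2) R) :
    cuspPoly * cuspQuo F + cuspLift (φ F) = F := by
  ext d
  rw [← bidegree_apply_self d, map_add, coeff_cuspPoly_mul, cuspQuo, cuspLift]
  set a := d 0
  set b := d 1
  simp only [coeff_ofBicoeff]
  by_cases hb : 2 ≤ b
  · rw [Nat.sub_add_cancel hb, if_pos hb, if_neg (show ¬b ≤ 1 by omega), chainSum_eq F a b]
    ring
  · rw [if_neg hb, if_pos (show b ≤ 1 by omega), hφ.coeff_eq_chainSum F (by omega),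
      chainSum_eq F a b]
    ring

lemma IsCuspSubst.map_cuspLift {f : PowerSeries R} (hf : PowerSeries.coeff 1 f = 0) :
    φ (cuspLift f) = f := by
  ext n
  obtain rfl | hn := eq_or_ne n 1
  · rw [hf, hφ.coeff_one_eq_zero]
  obtain ⟨i, j, hj, rfl⟩ : ∃ i j, j ≤ 1 ∧ 2 * i + 3 * j = n := by
    rcases Nat.even_or_odd' n with ⟨m, rfl | rfl⟩
    · exact ⟨m, 0, by omega, by omega⟩
    · exact ⟨m - 1, 1, by omega, by omega⟩
  rw [hφ.coeff_eq_chainSum _ hj, chainSum_eq, chainSum_cuspLift_of_one_lt f _ (by omega),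
    ite_self, add_zero, cuspLift, coeff_ofBicoeff, if_pos hj]

end Subst

lemma IsCuspSubst.ker_eq_span {φ : MvPowerSeries (Fin 2) R →+* PowerSeries R}
    (hφ : IsCuspSubst φ) : RingHom.ker φ = Ideal.span {cuspPoly} := by
  refine le_antisymm (fun F hF => ?_) ?_
  · rw [RingHom.mem_ker] at hF
    have hdiv := hφ.cuspPoly_mul_cuspQuo_add_cuspLift F
    rw [hF, cuspLift_zero, add_zero] at hdiv
    exact Ideal.mem_span_singleton.2 ⟨cuspQuo F, hdiv.symm⟩
  · rw [Ideal.span_le, Set.singleton_subset_iff, SetLike.mem_coe, RingHom.mem_ker, cuspPoly,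
      X_pow_eq, X_pow_eq, single_zero_eq_bidegree, single_one_eq_bidegree, map_sub,
      hφ.map_monomial, hφ.map_monomial, sub_self]

lemma IsCuspSubst.range_eq_cuspAlgebra {φ : MvPowerSeries (Fin 2) ℂ →ₐ[ℂ] PowerSeries ℂ}
    (hφ : IsCuspSubst φ) : φ.range = cuspAlgebra := by
  ext f
  constructor
  · rintro ⟨F, rfl⟩
    exact hφ.coeff_one_eq_zero F
  · intro hf
    exact ⟨cuspLift f, hφ.map_cuspLift hf⟩

end

end Cusp

/-- The `ℂ`-algebra homomorphism `φ : ℂ[[x,y]] → ℂ[[t]]` given by the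
substitution `x ↦ t², y ↦ t³` (i.e. sending `Σ a_{ij} x^i y^j` to `Σ a_{ij} t^{2i+3j}`,
which is the stated coefficient formula below) has kernel equal to the principal ideal
`(y² − x³)`, and its image equals the subalgebra `ℂ[[t²,t³]]` of power series whose
coefficient of `t` vanishes.  Consequently `φ` induces a `ℂ`-algebra isomorphism
`ℂ[[x,y]]/(y² − x³) ≅ ℂ[[t²,t³]]`. -/
theorem substitution_ker_eq_span_and_range_eq_cuspAlgebra
    (φ : MvPowerSeries (Fin 2) ℂ →ₐ[ℂ] PowerSeries ℂ)
    (hφ : ∀ (F : MvPowerSeries (Fin 2) ℂ) (n : ℕ),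
      PowerSeries.coeff n (φ F) =
        ∑ p ∈ (Finset.range (n + 1) ×ˢ Finset.range (n + 1)).filter
            (fun p => 2 * p.1 + 3 * p.2 = n),
          MvPowerSeries.coeff (Finsupp.single 0 p.1 + Finsupp.single 1 p.2) F) :
    RingHom.ker φ.toRingHom =
        Ideal.span {(MvPowerSeries.X 1 : MvPowerSeries (Fin 2) ℂ) ^ 2 -
          (MvPowerSeries.X 0) ^ 3} ∧
      φ.range = cuspAlgebra ∧
      Nonempty ((MvPowerSeries (Fin 2) ℂ ⧸
          Ideal.span {(MvPowerSeries.X 1 : MvPowerSeries (Fin 2) ℂ) ^ 2 -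
            (MvPowerSeries.X 0) ^ 3}) ≃ₐ[ℂ] cuspAlgebra) := by
  have hker : RingHom.ker φ.toRingHom = Ideal.span {Cusp.cuspPoly} :=
    Cusp.IsCuspSubst.ker_eq_span (φ := φ.toRingHom) hφ
  have hrange : φ.range = cuspAlgebra := Cusp.IsCuspSubst.range_eq_cuspAlgebra hφ
  exact ⟨hker, hrange, ⟨(Ideal.quotientEquivAlgOfEq ℂ hker.symm).trans
    ((Ideal.quotientKerEquivRange φ).trans (Subalgebra.equivOfEq _ _ hrange))⟩⟩
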